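/- The sequence {x^k} generated by the general AdaBB iteration is bounded: for all k ≥ 0, ‖x^k − x*‖ ≤ R. -/

import Mathlib

/-!
`Υ_k` is a Lyapunov function. Convexity at `x^k` gives the descent estimate
`‖x^{k+1} - x*‖² ≤ ‖x^k - x*‖² - 2α_k (f(x^k) - f_*) + α_k² ‖∇f(x^k)‖²`. Since
`x^{k+1} - x^k = -α_k ∇f(x^k)`, the definition of `λ_{k+1}`, convexity at `x^{k+1}` and
Cauchy–Schwarz bound the last term one step later:
`α_{k+1}² ‖∇f(x^{k+1})‖² ≤ M_{k+1} α_k² ‖∇f(x^k)‖² + P_{k+1} (f(x^k) - f(x^{k+1}))`.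
The three stepsize rules are designed so that `0 ≤ 2 M_{k+1} ≤ 1` and
`P_{k+1} = θ_{k+1} α_{k+1} ≤ (1 + θ_k) α_k`, whence `P_{k+2} ≤ α_{k+1} + P_{k+1}`. Together these
make `Υ_k` nonincreasing, while `Υ_1 ≤ R²` and `‖x^k - x*‖² ≤ Υ_k`.
-/

open scoped RealInnerProductSpace
open Finset Filter

noncomputable section

/-- The general AdaBB iteration (Algorithm 2 of the paper) for a convex differentiable
function `f : ℝⁿ → ℝ` that attains its minimum.  `f'` is the gradient of `f`,
`x` the iterates, `α` the stepsizes, `θ` the stepsize ratios and `lam` the short BB stepsizes. -/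
structure AdaBB (n : ℕ) where
  f : EuclideanSpace ℝ (Fin n) → ℝ
  f' : EuclideanSpace ℝ (Fin n) → EuclideanSpace ℝ (Fin n)
  x : ℕ → EuclideanSpace ℝ (Fin n)
  α : ℕ → ℝ
  θ : ℕ → ℝ
  lam : ℕ → ℝ
  hconv : ConvexOn ℝ Set.univ f
  hgrad : ∀ y, HasGradientAt f (f' y) y
  hmin : ∃ z, ∀ y, f z ≤ f y
  hα0 : 0 < α 0
  hθ0 : 0 ≤ θ 0
  hx1 : x 1 = x 0 - α 0 • f' (x 0)
  hne : ∀ k, f' (x (k + 1)) ≠ f' (x k)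
  hlam : ∀ k, lam (k + 1) =
    ⟪f' (x (k + 1)) - f' (x k), x (k + 1) - x k⟫ / ‖f' (x (k + 1)) - f' (x k)‖ ^ 2
  hlampos : ∀ k, 0 < lam (k + 1)
  hcase1 : ∀ k, α k ≤ lam (k + 1) →
    α (k + 1) = Real.sqrt (1 + θ k) * α k ∧ θ (k + 1) = α (k + 1) / α k
  hcase2 : ∀ k, α k / 2 < lam (k + 1) → lam (k + 1) < α k →
    (α (k + 1) = min (Real.sqrt (lam (k + 1) / (2 * (α k - lam (k + 1)))))
        (Real.sqrt ((1 + θ k) * lam (k + 1) / (2 * lam (k + 1) - α k))) * α k ∨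
      α (k + 1) = lam (k + 1)) ∧
    θ (k + 1) = 2 * α (k + 1) / α k - α (k + 1) / lam (k + 1)
  hcase3 : ∀ k, lam (k + 1) ≤ α k / 2 →
    (α (k + 1) = Real.sqrt (α k / (2 * (α k - lam (k + 1)))) * lam (k + 1) ∨
      α (k + 1) = lam (k + 1) / Real.sqrt 2) ∧
    θ (k + 1) = α (k + 1) / α k
  hstep : ∀ k, x (k + 2) = x (k + 1) - α (k + 1) • f' (x (k + 1))

namespace AdaBB

variable {n : ℕ}

/-- `M_k` (for `k ≥ 1`). -/
def M (S : AdaBB n) (k : ℕ) : ℝ :=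
  if S.α (k - 1) ≤ S.lam k then 0
  else if S.α (k - 1) / 2 < S.lam k then
    S.α k ^ 2 / (S.lam k * S.α (k - 1)) - S.α k ^ 2 / S.α (k - 1) ^ 2
  else S.α k ^ 2 / S.lam k ^ 2 - S.α k ^ 2 / (S.α (k - 1) * S.lam k)

/-- `P_k` for `k ≥ 1`. -/
def Paux (S : AdaBB n) (k : ℕ) : ℝ :=
  if S.α (k - 1) ≤ S.lam k then S.α k ^ 2 / S.α (k - 1)
  else if S.α (k - 1) / 2 < S.lam k then
    2 * S.α k ^ 2 / S.α (k - 1) - S.α k ^ 2 / S.lam k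
  else S.α k ^ 2 / S.α (k - 1)

/-- `P_k`, with the convention `P_0 = P_1 - α_0`. -/
def P (S : AdaBB n) (k : ℕ) : ℝ :=
  if k = 0 then S.Paux 1 - S.α 0 else S.Paux k

/-- `w_k = α_k + P_k - P_{k+1}`. -/
def w (S : AdaBB n) (k : ℕ) : ℝ := S.α k + S.P k - S.P (k + 1)

/-- The Lyapunov function `Υ_k` (for `k ≥ 1`), relative to a minimizer `xs` of `f`. -/
def Upsilon (S : AdaBB n) (xs : EuclideanSpace ℝ (Fin n)) (k : ℕ) : ℝ :=
  ‖S.x k - xs‖ ^ 2 + 2 * S.M k * ‖S.x k - S.x (k - 1)‖ ^ 2 +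
    (2 * S.α (k - 1) + 2 * S.P (k - 1)) * (S.f (S.x (k - 1)) - S.f xs)

end AdaBB

end

theorem ConvexOn.add_le_of_hasFDerivAt {E : Type*} [NormedAddCommGroup E] [NormedSpace ℝ E]
    {s : Set E} {f : E → ℝ} {f' : E →L[ℝ] ℝ} {x y : E} (hf : ConvexOn ℝ s f) (hx : x ∈ s)
    (hy : y ∈ s) (hd : HasFDerivAt f f' x) : f x + f' (y - x) ≤ f y := by
  have hd' : HasDerivAt (f ∘ AffineMap.lineMap x y) (f' (y - x)) (0 : ℝ) :=
    (by simpa using hd : HasFDerivAt f f' (AffineMap.lineMap x y (0 : ℝ))).comp_hasDerivAt _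
      AffineMap.hasDerivAt_lineMap
  have := (hf.comp_affineMap (AffineMap.lineMap x y)).le_slope_of_hasDerivAt
    (by simpa using hx) (by simpa using hy) one_pos hd'
  rw [slope_def_field] at this
  simp only [Function.comp_apply, AffineMap.lineMap_apply_zero, AffineMap.lineMap_apply_one,
    sub_zero, div_one] at this
  linarith

theorem ConvexOn.add_inner_le_of_hasGradientAt {F : Type*} [NormedAddCommGroup F]
    [InnerProductSpace ℝ F] [CompleteSpace F] {s : Set F} {f : F → ℝ} {f' x y : F}
    (hf : ConvexOn ℝ s f) (hx : x ∈ s) (hy : y ∈ s) (hd : HasGradientAt f f' x) :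
    f x + ⟪f', y - x⟫ ≤ f y := by
  simpa using hf.add_le_of_hasFDerivAt hx hy hd.hasFDerivAt

noncomputable section

section StepWeights

def stepWeightM (a b l : ℝ) : ℝ :=
  if a ≤ l then 0
  else if a / 2 < l then b ^ 2 * (a - l) / (l * a ^ 2)
  else b ^ 2 * (a - l) / (a * l ^ 2)

def stepWeightP (a b l : ℝ) : ℝ :=
  if a ≤ l then b ^ 2 / a
  else if a / 2 < l then b ^ 2 * (2 * l - a) / (l * a)
  else b ^ 2 / a

variable {a b l : ℝ}

lemma stepWeightM_nonneg (ha : 0 < a) (hl : 0 < l) : 0 ≤ stepWeightM a b l := by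
  unfold stepWeightM
  split_ifs with h₁ h₂
  · rfl
  all_goals have : 0 ≤ a - l := by linarith
  all_goals positivity

lemma stepWeightP_nonneg (ha : 0 < a) (hl : 0 < l) : 0 ≤ stepWeightP a b l := by
  unfold stepWeightP
  split_ifs with h₁ h₂
  · positivity
  · have : 0 ≤ 2 * l - a := by linarith
    positivity
  · positivity

-- In one AdaBB step, `G`, `g`, `t` and `δ` stand for `‖∇f(x^k)‖²`, `‖∇f(x^{k+1})‖²`,
-- `‖∇f(x^{k+1}) - ∇f(x^k)‖²` and `f(x^k) - f(x^{k+1})`.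
lemma sq_mul_le_stepWeightM_add_stepWeightP {G g t δ : ℝ} (ha : 0 < a) (hl : 0 < l)
    (ht : 0 ≤ t) (hg : a * g = a * G + (a - 2 * l) * t) (hδ : a * G ≤ l * t + δ)
    (hcs : l ^ 2 * t ≤ a ^ 2 * G) :
    b ^ 2 * g ≤ stepWeightM a b l * (a ^ 2 * G) + stepWeightP a b l * δ := by
  unfold stepWeightM stepWeightP
  split_ifs with h₁ h₂
  · have key : a * g ≤ δ := by nlinarith
    calc b ^ 2 * g = b ^ 2 / a * (a * g) := by field_simp
      _ ≤ b ^ 2 / a * δ := by gcongr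
      _ = 0 * (a ^ 2 * G) + b ^ 2 / a * δ := by ring
  · have key : l * (a * g) ≤ (a - l) * (a * G) + (2 * l - a) * δ := by
      nlinarith [mul_le_mul_of_nonneg_left hδ (by linarith : 0 ≤ 2 * l - a)]
    calc b ^ 2 * g = b ^ 2 / (l * a) * (l * (a * g)) := by field_simp
      _ ≤ b ^ 2 / (l * a) * ((a - l) * (a * G) + (2 * l - a) * δ) := by gcongr
      _ = _ := by field_simp
  · have key : l ^ 2 * (a * g) ≤ (a - l) * (a ^ 2 * G) + l ^ 2 * δ := by
      nlinarith [mul_le_mul_of_nonneg_left hδ (sq_nonneg l),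
        mul_le_mul_of_nonneg_left hcs (by linarith : 0 ≤ a - l)]
    calc b ^ 2 * g = b ^ 2 / (a * l ^ 2) * (l ^ 2 * (a * g)) := by field_simp
      _ ≤ b ^ 2 / (a * l ^ 2) * ((a - l) * (a ^ 2 * G) + l ^ 2 * δ) := by gcongr
      _ = _ := by field_simp

end StepWeights

namespace AdaBB

variable {n : ℕ} (S : AdaBB n)

lemma x_succ (k : ℕ) : S.x (k + 1) = S.x k - S.α k • S.f' (S.x k) := by
  cases k with
  | zero => exact S.hx1
  | succ k => exact S.hstep k

lemma x_succ_sub (k : ℕ) : S.x (k + 1) - S.x k = -(S.α k • S.f' (S.x k)) := by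
  rw [S.x_succ, sub_sub_cancel_left]

lemma add_inner_le (x y : EuclideanSpace ℝ (Fin n)) : S.f x + ⟪S.f' x, y - x⟫ ≤ S.f y :=
  S.hconv.add_inner_le_of_hasGradientAt trivial trivial (S.hgrad x)

lemma norm_x_succ_sub_sq (k : ℕ) :
    ‖S.x (k + 1) - S.x k‖ ^ 2 = S.α k ^ 2 * ‖S.f' (S.x k)‖ ^ 2 := by
  rw [S.x_succ_sub, norm_neg, norm_smul, mul_pow, Real.norm_eq_abs, sq_abs]

lemma lam_succ_mul_norm_sq (k : ℕ) :
    S.lam (k + 1) * ‖S.f' (S.x (k + 1)) - S.f' (S.x k)‖ ^ 2 =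
      ⟪S.f' (S.x (k + 1)) - S.f' (S.x k), S.x (k + 1) - S.x k⟫ := by
  have : ‖S.f' (S.x (k + 1)) - S.f' (S.x k)‖ ≠ 0 := norm_ne_zero_iff.2 (sub_ne_zero.2 (S.hne k))
  rw [S.hlam, div_mul_cancel₀ _ (pow_ne_zero 2 this)]

lemma α_mul_norm_f'_succ_sq (k : ℕ) :
    S.α k * ‖S.f' (S.x (k + 1))‖ ^ 2 = S.α k * ‖S.f' (S.x k)‖ ^ 2 +
      (S.α k - 2 * S.lam (k + 1)) * ‖S.f' (S.x (k + 1)) - S.f' (S.x k)‖ ^ 2 := by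
  have h := S.lam_succ_mul_norm_sq k
  rw [S.x_succ_sub, inner_neg_right, inner_smul_right, inner_sub_left,
    real_inner_self_eq_norm_sq] at h
  rw [norm_sub_sq_real] at h ⊢
  linear_combination 2 * h

lemma α_mul_norm_f'_sq_le (k : ℕ) :
    S.α k * ‖S.f' (S.x k)‖ ^ 2 ≤ S.lam (k + 1) * ‖S.f' (S.x (k + 1)) - S.f' (S.x k)‖ ^ 2 +
      (S.f (S.x k) - S.f (S.x (k + 1))) := by
  have hconv := S.add_inner_le (S.x (k + 1)) (S.x k)
  rw [S.lam_succ_mul_norm_sq, inner_sub_left]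
  rw [← neg_sub, S.x_succ_sub, neg_neg, inner_smul_right] at hconv
  rw [S.x_succ_sub, inner_neg_right, inner_neg_right, inner_smul_right,
    inner_smul_right, real_inner_self_eq_norm_sq]
  linarith

lemma lam_succ_mul_norm_le (k : ℕ) :
    S.lam (k + 1) * ‖S.f' (S.x (k + 1)) - S.f' (S.x k)‖ ≤ ‖S.x (k + 1) - S.x k‖ := by
  have hpos : 0 < ‖S.f' (S.x (k + 1)) - S.f' (S.x k)‖ := norm_pos_iff.2 (sub_ne_zero.2 (S.hne k))
  refine le_of_mul_le_mul_right ?_ hpos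
  calc S.lam (k + 1) * ‖S.f' (S.x (k + 1)) - S.f' (S.x k)‖ * ‖S.f' (S.x (k + 1)) - S.f' (S.x k)‖
      = ⟪S.f' (S.x (k + 1)) - S.f' (S.x k), S.x (k + 1) - S.x k⟫ := by
        rw [← S.lam_succ_mul_norm_sq]; ring
    _ ≤ ‖S.x (k + 1) - S.x k‖ * ‖S.f' (S.x (k + 1)) - S.f' (S.x k)‖ := by
        rw [mul_comm]; exact real_inner_le_norm _ _

lemma α_succ_pos {k : ℕ} (hα : 0 < S.α k) (hθ : 0 ≤ S.θ k) : 0 < S.α (k + 1) := by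
  have hl := S.hlampos k
  rcases le_or_gt (S.α k) (S.lam (k + 1)) with h₁ | h₁
  · rw [(S.hcase1 k h₁).1]
    positivity
  rcases lt_or_ge (S.α k / 2) (S.lam (k + 1)) with h₂ | h₂
  · have : 0 < S.α k - S.lam (k + 1) := by linarith
    have : 0 < 2 * S.lam (k + 1) - S.α k := by linarith
    rcases (S.hcase2 k h₂ h₁).1 with h | h <;> rw [h]
    · exact mul_pos (lt_min (by positivity) (by positivity)) hα
    · exact hl
  · have : 0 < S.α k - S.lam (k + 1) := by linarith
    rcases (S.hcase3 k h₂).1 with h | h <;> rw [h] <;> positivity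

lemma Paux_succ_eq_θ_mul_α (k : ℕ) : S.Paux (k + 1) = S.θ (k + 1) * S.α (k + 1) := by
  unfold Paux
  simp only [Nat.add_sub_cancel]
  split_ifs with h₁ h₂
  · rw [(S.hcase1 k h₁).2]; ring
  · rw [(S.hcase2 k h₂ (lt_of_not_ge h₁)).2]; ring
  · rw [(S.hcase3 k (le_of_not_gt h₂)).2]; ring

lemma M_succ {k : ℕ} (hα : 0 < S.α k) :
    S.M (k + 1) = stepWeightM (S.α k) (S.α (k + 1)) (S.lam (k + 1)) := by
  have hl := S.hlampos k
  unfold M stepWeightM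
  simp only [Nat.add_sub_cancel]
  split_ifs <;> field_simp

lemma Paux_succ {k : ℕ} (hα : 0 < S.α k) :
    S.Paux (k + 1) = stepWeightP (S.α k) (S.α (k + 1)) (S.lam (k + 1)) := by
  have hl := S.hlampos k
  unfold Paux stepWeightP
  simp only [Nat.add_sub_cancel]
  split_ifs <;> field_simp

lemma α_pos_and_θ_nonneg (k : ℕ) : 0 < S.α k ∧ 0 ≤ S.θ k := by
  induction k with
  | zero => exact ⟨S.hα0, S.hθ0⟩
  | succ k ih =>
    have hα := S.α_succ_pos ih.1 ih.2
    refine ⟨hα, nonneg_of_mul_nonneg_left ?_ hα⟩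
    rw [← Paux_succ_eq_θ_mul_α, S.Paux_succ ih.1]
    exact stepWeightP_nonneg ih.1 (S.hlampos k)

lemma α_pos (k : ℕ) : 0 < S.α k := (S.α_pos_and_θ_nonneg k).1

lemma θ_nonneg (k : ℕ) : 0 ≤ S.θ k := (S.α_pos_and_θ_nonneg k).2

lemma α_succ_sq_of_le {k : ℕ} (h : S.α k ≤ S.lam (k + 1)) :
    S.α (k + 1) ^ 2 = (1 + S.θ k) * S.α k ^ 2 := by
  rw [(S.hcase1 k h).1, mul_pow, Real.sq_sqrt (by linarith [S.θ_nonneg k])]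

lemma α_succ_sq_le_of_lt_of_lt {k : ℕ} (h₁ : S.α k / 2 < S.lam (k + 1))
    (h₂ : S.lam (k + 1) < S.α k) :
    2 * (S.α k - S.lam (k + 1)) * S.α (k + 1) ^ 2 ≤ S.lam (k + 1) * S.α k ^ 2 ∧
      (2 * S.lam (k + 1) - S.α k) * S.α (k + 1) ^ 2 ≤ (1 + S.θ k) * S.lam (k + 1) * S.α k ^ 2 := by
  have hl := S.hlampos k
  have hθ := S.θ_nonneg k
  have hrule := (S.hcase2 k h₁ h₂).1
  set a := S.α k
  set l := S.lam (k + 1)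
  have hA : 0 < 2 * (a - l) := by linarith
  have hB : 0 < 2 * l - a := by linarith
  rcases hrule with h | h <;> rw [h]
  · set c := min √(l / (2 * (a - l))) √((1 + S.θ k) * l / (2 * l - a))
    have hc : 0 ≤ c := le_min (Real.sqrt_nonneg _) (Real.sqrt_nonneg _)
    have hcA : c ^ 2 ≤ l / (2 * (a - l)) :=
      (pow_le_pow_left₀ hc (min_le_left _ _) 2).trans_eq (Real.sq_sqrt (by positivity))
    have hcB : c ^ 2 ≤ (1 + S.θ k) * l / (2 * l - a) :=
      (pow_le_pow_left₀ hc (min_le_right _ _) 2).trans_eq (Real.sq_sqrt (by positivity))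
    rw [le_div_iff₀ hA] at hcA
    rw [le_div_iff₀ hB] at hcB
    constructor <;> nlinarith [sq_nonneg a]
  · constructor
    · nlinarith [mul_nonneg hl.le (sq_nonneg (a - l)), pow_pos hl 3]
    · nlinarith [mul_nonneg hl.le (mul_nonneg hA.le (by linarith : 0 ≤ a + 2 * l)),
        mul_nonneg hθ (mul_nonneg hl.le (sq_nonneg a))]

lemma α_succ_sq_le_of_le_half {k : ℕ} (h : S.lam (k + 1) ≤ S.α k / 2) :
    2 * (S.α k - S.lam (k + 1)) * S.α (k + 1) ^ 2 ≤ S.α k * S.lam (k + 1) ^ 2 := by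
  have hα := S.α_pos k
  have hl := S.hlampos k
  have hA : 0 < S.α k - S.lam (k + 1) := by linarith
  rcases (S.hcase3 k h).1 with h | h <;> rw [h]
  · rw [mul_pow, Real.sq_sqrt (by positivity)]
    exact le_of_eq (by field_simp)
  · rw [div_pow, Real.sq_sqrt zero_le_two]
    nlinarith [pow_pos hl 2]

lemma M_succ_nonneg (k : ℕ) : 0 ≤ S.M (k + 1) :=
  S.M_succ (S.α_pos k) ▸ stepWeightM_nonneg (S.α_pos k) (S.hlampos k)

lemma Paux_succ_nonneg (k : ℕ) : 0 ≤ S.Paux (k + 1) :=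
  S.Paux_succ (S.α_pos k) ▸ stepWeightP_nonneg (S.α_pos k) (S.hlampos k)

lemma two_mul_M_succ_le_one (k : ℕ) : 2 * S.M (k + 1) ≤ 1 := by
  have hα := S.α_pos k
  have hl := S.hlampos k
  rw [S.M_succ hα]
  unfold stepWeightM
  split_ifs with h₁ h₂
  · norm_num
  · have := (S.α_succ_sq_le_of_lt_of_lt h₂ (lt_of_not_ge h₁)).1
    rw [← mul_div_assoc, div_le_one (by positivity)]
    linarith
  · have := S.α_succ_sq_le_of_le_half (le_of_not_gt h₂)
    rw [← mul_div_assoc, div_le_one (by positivity)]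
    linarith

lemma Paux_succ_le (k : ℕ) : S.Paux (k + 1) ≤ (1 + S.θ k) * S.α k := by
  have hα := S.α_pos k
  have hl := S.hlampos k
  rw [S.Paux_succ hα]
  unfold stepWeightP
  split_ifs with h₁ h₂
  · rw [S.α_succ_sq_of_le h₁]
    exact le_of_eq (by field_simp)
  · have := (S.α_succ_sq_le_of_lt_of_lt h₂ (lt_of_not_ge h₁)).2
    rw [div_le_iff₀ (by positivity)]
    linarith
  · have h₃ := S.α_succ_sq_le_of_le_half (le_of_not_gt h₂)
    have hl₂ : S.lam (k + 1) ≤ S.α k / 2 := le_of_not_gt h₂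
    have hb : S.α (k + 1) ^ 2 ≤ S.lam (k + 1) ^ 2 := by
      refine le_of_mul_le_mul_left ?_ hα
      nlinarith [sq_nonneg (S.α (k + 1))]
    rw [div_le_iff₀ hα]
    nlinarith [mul_nonneg (S.θ_nonneg k) (sq_nonneg (S.α k))]

lemma P_zero : S.P 0 = S.P 1 - S.α 0 := rfl

lemma P_succ (k : ℕ) : S.P (k + 1) = S.Paux (k + 1) := if_neg k.succ_ne_zero

lemma P_succ_le (k : ℕ) : S.P (k + 1) ≤ S.α k + S.P k := by
  cases k with
  | zero => rw [P_zero]; linarith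
  | succ k =>
    rw [S.P_succ, S.P_succ, S.Paux_succ_eq_θ_mul_α k]
    linarith [S.Paux_succ_le (k + 1)]

lemma α_add_P_nonneg (k : ℕ) : 0 ≤ S.α k + S.P k := by
  cases k with
  | zero => rw [P_zero, P_succ]; linarith [S.Paux_succ_nonneg 0]
  | succ k => rw [P_succ]; linarith [S.α_pos (k + 1), S.Paux_succ_nonneg k]

lemma norm_x_succ_sub_sq_le (k : ℕ) (z : EuclideanSpace ℝ (Fin n)) :
    ‖S.x (k + 1) - z‖ ^ 2 ≤
      ‖S.x k - z‖ ^ 2 - 2 * S.α k * (S.f (S.x k) - S.f z) + S.α k ^ 2 * ‖S.f' (S.x k)‖ ^ 2 := by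
  have hconv := S.add_inner_le (S.x k) z
  rw [← neg_sub, inner_neg_right] at hconv
  rw [S.x_succ, sub_right_comm, norm_sub_sq_real, real_inner_smul_right, real_inner_comm,
    norm_smul, mul_pow, Real.norm_eq_abs, sq_abs]
  nlinarith [mul_le_mul_of_nonneg_left hconv (S.α_pos k).le]

lemma sq_α_succ_mul_norm_f'_le (k : ℕ) :
    S.α (k + 1) ^ 2 * ‖S.f' (S.x (k + 1))‖ ^ 2 ≤ S.M (k + 1) * (S.α k ^ 2 * ‖S.f' (S.x k)‖ ^ 2) +
      S.Paux (k + 1) * (S.f (S.x k) - S.f (S.x (k + 1))) := by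
  have hα := S.α_pos k
  have hl := S.hlampos k
  rw [S.M_succ hα, S.Paux_succ hα]
  refine sq_mul_le_stepWeightM_add_stepWeightP hα hl (sq_nonneg _) (S.α_mul_norm_f'_succ_sq k)
    (S.α_mul_norm_f'_sq_le k) ?_
  calc S.lam (k + 1) ^ 2 * ‖S.f' (S.x (k + 1)) - S.f' (S.x k)‖ ^ 2
      = (S.lam (k + 1) * ‖S.f' (S.x (k + 1)) - S.f' (S.x k)‖) ^ 2 := by ring
    _ ≤ ‖S.x (k + 1) - S.x k‖ ^ 2 := by gcongr; exact S.lam_succ_mul_norm_le k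
    _ = S.α k ^ 2 * ‖S.f' (S.x k)‖ ^ 2 := S.norm_x_succ_sub_sq k

variable (xs : EuclideanSpace ℝ (Fin n))

lemma Upsilon_succ (k : ℕ) : S.Upsilon xs (k + 1) = ‖S.x (k + 1) - xs‖ ^ 2 +
    2 * S.M (k + 1) * (S.α k ^ 2 * ‖S.f' (S.x k)‖ ^ 2) +
      2 * (S.α k + S.P k) * (S.f (S.x k) - S.f xs) := by
  rw [Upsilon, Nat.add_sub_cancel, norm_x_succ_sub_sq]
  ring

lemma Upsilon_one_le : S.Upsilon xs 1 ≤ ‖S.x 0 - xs‖ ^ 2 +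
    S.α 0 ^ 2 * (1 + 2 * S.M 1) * ‖S.f' (S.x 0)‖ ^ 2 +
      (2 * S.P 1 - 2 * S.α 0) * (S.f (S.x 0) - S.f xs) := by
  rw [Upsilon_succ, P_zero]
  linarith [S.norm_x_succ_sub_sq_le 0 xs]

variable {xs}

lemma Upsilon_succ_succ_le (hxs : ∀ y, S.f xs ≤ S.f y) (k : ℕ) :
    S.Upsilon xs (k + 2) ≤ S.Upsilon xs (k + 1) := by
  have hdesc := S.norm_x_succ_sub_sq_le (k + 1) xs
  have hstep := S.sq_α_succ_mul_norm_f'_le k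
  have hM : 0 ≤ (1 - 2 * S.M (k + 2)) * (S.α (k + 1) ^ 2 * ‖S.f' (S.x (k + 1))‖ ^ 2) :=
    mul_nonneg (by linarith [S.two_mul_M_succ_le_one (k + 1)]) (by positivity)
  have hP : 0 ≤ (S.α k + S.P k - S.Paux (k + 1)) * (S.f (S.x k) - S.f xs) :=
    mul_nonneg (by linarith [S.P_succ_le k, S.P_succ k]) (sub_nonneg.2 (hxs _))
  rw [Upsilon_succ, Upsilon_succ, P_succ]
  linarith

lemma norm_x_succ_sub_sq_le_Upsilon (hxs : ∀ y, S.f xs ≤ S.f y) (k : ℕ) :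
    ‖S.x (k + 1) - xs‖ ^ 2 ≤ S.Upsilon xs (k + 1) := by
  rw [Upsilon_succ]
  have := S.M_succ_nonneg k
  have := mul_nonneg (S.α_add_P_nonneg k) (sub_nonneg.2 (hxs (S.x k)))
  nlinarith [sq_nonneg (S.α k * ‖S.f' (S.x k)‖)]

end AdaBB

end

/-- Corollary 3.5: the sequence `{x^k}` generated by the general AdaBB iteration is bounded:
`‖x^k - x*‖ ≤ R` for all `k ≥ 0`, where
`R² = ‖x^0 - x*‖² + α_0²(1 + 2M_1)‖∇f(x^0)‖² + max{2P_1 - 2α_0, 0}·(f(x^0) - f_*)`. -/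
theorem adabb_bounded (n : ℕ) (S : AdaBB n)
    (xs : EuclideanSpace ℝ (Fin n)) (hxs : ∀ y, S.f xs ≤ S.f y)
    (R : ℝ) (hR0 : 0 ≤ R)
    (hR2 : R ^ 2 = ‖S.x 0 - xs‖ ^ 2 + S.α 0 ^ 2 * (1 + 2 * S.M 1) * ‖S.f' (S.x 0)‖ ^ 2 +
      max (2 * S.P 1 - 2 * S.α 0) 0 * (S.f (S.x 0) - S.f xs)) :
    ∀ k, ‖S.x k - xs‖ ≤ R := by
  have hf₀ : 0 ≤ S.f (S.x 0) - S.f xs := sub_nonneg.2 (hxs _)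
  have hM₁ : 0 ≤ 1 + 2 * S.M 1 := by linarith [S.M_succ_nonneg 0]
  intro k
  refine le_of_pow_le_pow_left₀ two_ne_zero hR0 ?_
  cases k with
  | zero =>
    have := mul_nonneg (le_max_right (2 * S.P 1 - 2 * S.α 0) 0) hf₀
    nlinarith [mul_nonneg (mul_nonneg (sq_nonneg (S.α 0)) hM₁) (sq_nonneg ‖S.f' (S.x 0)‖)]
  | succ k =>
    calc ‖S.x (k + 1) - xs‖ ^ 2 ≤ S.Upsilon xs (k + 1) := S.norm_x_succ_sub_sq_le_Upsilon hxs k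
      _ ≤ S.Upsilon xs 1 :=
        antitone_nat_of_succ_le (f := fun k ↦ S.Upsilon xs (k + 1)) (S.Upsilon_succ_succ_le hxs)
          k.zero_le
      _ ≤ R ^ 2 := by
        rw [hR2]
        have := mul_le_mul_of_nonneg_right (le_max_left (2 * S.P 1 - 2 * S.α 0) 0) hf₀
        linarith [S.Upsilon_one_le xs]
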